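/- arXiv:2504.05261 — 5 statements merged into one kernel-verified Lean document; each statement's English description precedes it below -/
import Mathlib

section
/- Let k be an infinite field and R = k[x,y] with homogeneous maximal ideal 𝔪 = (x,y). Let I be a nonzero proper monomial ideal of R that is full. Then there exists an ordering f₁, …, f_s of the minimal monomial generating set G(I) of I such that deg f₁ ≤ deg f₂ ≤ ⋯ ≤ deg f_s and, for every 1 ≤ j ≤ s−1, the colon ideal (f₁, …, f_j) : f_{j+1} is the principal ideal generated by a single variable (x or y). -/
open MvPolynomial

noncomputable section

variable {k : Type*} [Field k]

/-- An ideal of a polynomial ring is homogeneous if it contains all homogeneous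
components of its elements. -/
def IsHomogeneousIdeal {σ : Type*} (I : Ideal (MvPolynomial σ k)) : Prop :=
  ∀ p ∈ I, ∀ d : ℕ, MvPolynomial.homogeneousComponent d p ∈ I

/-- The homogeneous maximal ideal `(x, y)` of `k[x,y]`. -/
def maxIdeal (k : Type*) [Field k] : Ideal (MvPolynomial (Fin 2) k) :=
  Ideal.span {X 0, X 1}

/-- A homogeneous ideal `I ⊆ k[x,y]` is full if `(I : z) = (I : 𝔪)` for some
linear form `z`. -/
def IsFull (I : Ideal (MvPolynomial (Fin 2) k)) : Prop :=
  ∃ z : MvPolynomial (Fin 2) k, z ≠ 0 ∧ z.IsHomogeneous 1 ∧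
    Submodule.colon I (Ideal.span {z}) = Submodule.colon I (maxIdeal k)

/-- The order `o(I)` of an ideal: the smallest degree of a nonzero homogeneous
element of `I`. -/
def ordDeg (I : Ideal (MvPolynomial (Fin 2) k)) : ℕ :=
  sInf {d : ℕ | ∃ p ∈ I, p ≠ 0 ∧ MvPolynomial.IsHomogeneous p d}

/-- A monomial ideal: an ideal generated by monomials. -/
def IsMonomialIdeal {σ : Type*} (I : Ideal (MvPolynomial σ k)) : Prop :=
  ∃ A : Set (σ →₀ ℕ), I = Ideal.span ((fun a => MvPolynomial.monomial a (1 : k)) '' A)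

/-- The minimal monomial generating set `G(I)` of a monomial ideal: the monic monomials
of `I` whose exponent vectors are minimal with respect to componentwise order
(equivalently, divisibility). -/
def minimalMonomialGens {σ : Type*} (I : Ideal (MvPolynomial σ k)) :
    Set (MvPolynomial σ k) :=
  (fun a => MvPolynomial.monomial a (1 : k)) ''
    {a : σ →₀ ℕ | MvPolynomial.monomial a (1 : k) ∈ I ∧
      ∀ b : σ →₀ ℕ, MvPolynomial.monomial b (1 : k) ∈ I → b ≤ a → b = a}


/-!
Sort `G(I)` as `x^{a_0} y^{b_0}, …, x^{a_{s-1}} y^{b_{s-1}}` with the `a_n` decreasing and the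
`b_n` increasing. Fullness forces the monomials of `I` of each fixed degree to form an interval
along the antidiagonal: if `x^a y^b` and `x^{a'} y^{b'}` lie in `I` with `a' < a`, `b < b'`, write
`z = αx + βy` and `p = x^{a'} y^b ∑ (αx)^t (-βy)^{N-t}`; then `pz` is a combination of the two
endpoints of the antidiagonal through the higher of them, so `pz ∈ I`, hence `px, py ∈ I`, which
puts the neighbour of one endpoint into `I`.

Applied to `x^{a_i} y^{b_i}` and `x^{a_{j+1}} y^{b_{j+1}}` with `i ≤ j`, this gives
`b_{i+1} = b_i + 1` or `a_j = a_{j+1} + 1`. Hence there is a turning point `m` such that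
consecutive generators before `m` differ by one in `y` and those after `m` by one in `x`. So
the degree decreases up to `m` and increases after it, and adding the generators by increasing
degree, moving outwards from `m`, each new generator finds its inner neighbour already present
and all present generators on its inner side: every colon ideal is `(y)` or `(x)`.
-/

namespace MvPolynomial

section MonomialIdeal

variable {σ R : Type*} [CommSemiring R]

theorem monomial_one_mem_of_le {I : Ideal (MvPolynomial σ R)} {a b : σ →₀ ℕ}
    (ha : monomial a (1 : R) ∈ I) (hab : a ≤ b) : monomial b (1 : R) ∈ I := by
  rw [← tsub_add_cancel_of_le hab, ← one_mul (1 : R), ← monomial_mul]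
  exact I.mul_mem_left _ ha

theorem colon_span_monomial_eq_span_X {S : Set (σ →₀ ℕ)} {e : σ →₀ ℕ} {i : σ}
    (hle : ∃ a ∈ S, a ≤ e + Finsupp.single i 1) (hlt : ∀ a ∈ S, e i < a i) :
    (Ideal.span ((fun a => monomial a (1 : R)) '' S)).colon (Ideal.span {monomial e (1 : R)}) =
      Ideal.span {X i} := by
  have hX : ({X i} : Set (MvPolynomial σ R)) =
      (fun a => monomial a (1 : R)) '' {Finsupp.single i 1} := by
    rw [Set.image_singleton]; rfl
  apply le_antisymm
  · intro r hr
    rw [Ideal.mem_colon_span_singleton, mem_ideal_span_monomial_image] at hr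
    rw [hX, mem_ideal_span_monomial_image]
    intro f hf
    have hfe : f + e ∈ (r * monomial e 1).support := by
      rwa [mem_support_iff, coeff_mul_monomial, mul_one, ← mem_support_iff]
    obtain ⟨a, haS, hae⟩ := hr _ hfe
    have := hae i
    have := hlt a haS
    refine ⟨_, rfl, Finsupp.single_le_iff.mpr ?_⟩
    simp only [Finsupp.coe_add, Pi.add_apply] at *
    omega
  · rw [Ideal.span_le, Set.singleton_subset_iff, SetLike.mem_coe, Ideal.mem_colon_span_singleton,
      X, monomial_mul, one_mul, add_comm, mem_ideal_span_monomial_image]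
    intro f hf
    obtain ⟨a, haS, ha⟩ := hle
    exact ⟨a, haS, (Finset.mem_singleton.mp (support_monomial_subset hf)).symm ▸ ha⟩

def minimalExponents (I : Ideal (MvPolynomial σ R)) : Set (σ →₀ ℕ) :=
  {a | Minimal (fun b => monomial b (1 : R) ∈ I) a}

theorem minimalMonomialGens_eq_image {I : Ideal (MvPolynomial σ k)} :
    minimalMonomialGens I = (fun a => monomial a (1 : k)) '' minimalExponents I := by
  simp only [minimalMonomialGens, minimalExponents, minimal_iff, eq_comm]

theorem monomial_mem_iff_exists_minimalExponents_le {I : Ideal (MvPolynomial σ R)}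
    {e : σ →₀ ℕ} : monomial e (1 : R) ∈ I ↔ ∃ a ∈ minimalExponents I, a ≤ e := by
  refine ⟨fun he => ?_, fun ⟨a, ha, hae⟩ => ?_⟩
  · obtain ⟨a, hae, ha⟩ :=
      exists_minimal_le_of_wellFoundedLT (fun b => monomial b (1 : R) ∈ I) e he
    exact ⟨a, ha, hae⟩
  · exact monomial_one_mem_of_le
      (show Minimal (fun b => monomial b (1 : R) ∈ I) a from ha).prop hae

theorem minimalExponents_isAntichain (I : Ideal (MvPolynomial σ R)) :
    IsAntichain (· ≤ ·) (minimalExponents I) :=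
  setOfPred_minimal_antichain _

theorem minimalExponents_finite [Finite σ] (I : Ideal (MvPolynomial σ R)) :
    (minimalExponents I).Finite :=
  WellQuasiOrderedLE.finite_of_isAntichain (minimalExponents_isAntichain I)

theorem totalDegree_monomial_one [Nontrivial R] (u : σ →₀ ℕ) :
    (monomial u (1 : R)).totalDegree = u.degree :=
  totalDegree_monomial u one_ne_zero

end MonomialIdeal

end MvPolynomial

open MvPolynomial

theorem IsMonomialIdeal.monomial_mem_of_mem_support {σ : Type*} {I : Ideal (MvPolynomial σ k)}
    (hI : IsMonomialIdeal I) {p : MvPolynomial σ k} (hp : p ∈ I) {e : σ →₀ ℕ}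
    (he : e ∈ p.support) : monomial e (1 : k) ∈ I := by
  obtain ⟨A, rfl⟩ := hI
  obtain ⟨a, haA, hae⟩ := mem_ideal_span_monomial_image.mp hp e he
  exact monomial_one_mem_of_le (Ideal.subset_span ⟨a, haA, rfl⟩) hae

theorem IsMonomialIdeal.monomial_mem_of_mul_linearForm_mem {σ : Type*}
    {I : Ideal (MvPolynomial σ k)} (hI : IsMonomialIdeal I) {i j : σ} (hij : i ≠ j) {α β : k}
    (hα : α ≠ 0) (hcolon : ∀ p, p * (C α * X i + C β * X j) ∈ I → p * X j ∈ I)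
    {e : σ →₀ ℕ} {N : ℕ} (hA : monomial (e + Finsupp.single i (N + 1)) (1 : k) ∈ I)
    (hB : β = 0 ∨ monomial (e + Finsupp.single j (N + 1)) (1 : k) ∈ I) :
    monomial (e + Finsupp.single i N + Finsupp.single j 1) (1 : k) ∈ I := by
  classical
  have hpow (a : k) (l : σ) (n : ℕ) :
      (C a * X l) ^ n = monomial (Finsupp.single l n) (a ^ n) := by
    rw [mul_pow, ← map_pow, C_mul_X_pow_eq_monomial]
  -- the exponent `N + 1 - 1 - t` is the shape in which `geom_sum₂_mul` states the sum
  set p := monomial e (1 : k) *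
    ∑ t ∈ Finset.range (N + 1), (C α * X i) ^ t * (C (-β) * X j) ^ (N + 1 - 1 - t)
  have hpz : p * (C α * X i + C β * X j) ∈ I := by
    have hz : C α * X i + C β * X j = C α * X i - C (-β) * X j := by simp
    rw [hz, mul_assoc, geom_sum₂_mul, mul_sub, hpow, hpow, monomial_mul, monomial_mul,
      one_mul, one_mul, ← mul_one (α ^ _), ← mul_one ((-β) ^ _), ← C_mul_monomial,
      ← C_mul_monomial]
    refine sub_mem (I.mul_mem_left _ hA) ?_
    rcases hB with hβ | hB
    · simp [hβ]
    · exact I.mul_mem_left _ hB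
  have hterm (t : ℕ) :
      monomial e (1 : k) * ((C α * X i) ^ t * (C (-β) * X j) ^ (N + 1 - 1 - t)) * X j =
        monomial (e + Finsupp.single i t + Finsupp.single j (N - t + 1))
          (α ^ t * (-β) ^ (N - t)) := by
    rw [hpow, hpow, X, monomial_mul, monomial_mul, monomial_mul, Nat.add_sub_cancel,
      Finsupp.single_add, one_mul, mul_one, add_assoc, add_assoc, add_assoc]
  have hcoeff : coeff (e + Finsupp.single i N + Finsupp.single j 1) (p * X j) = α ^ N := by
    simp only [p, Finset.mul_sum, Finset.sum_mul, hterm, coeff_sum, coeff_monomial]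
    rw [Finset.sum_eq_single N]
    · simp
    · intro t _ htN
      rw [if_neg]
      intro h
      have := congrArg (· i) h
      simp only [Finsupp.coe_add, Pi.add_apply, Finsupp.single_eq_same,
        Finsupp.single_eq_of_ne hij, add_zero] at this
      omega
    · simp
  exact hI.monomial_mem_of_mem_support (hcolon p hpz)
    (mem_support_iff.mpr (hcoeff ▸ pow_ne_zero N hα))

def monoExp (a b : ℕ) : Fin 2 →₀ ℕ := Finsupp.single 0 a + Finsupp.single 1 b

@[simp] theorem monoExp_apply_zero (a b : ℕ) : monoExp a b 0 = a := by simp [monoExp]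

@[simp] theorem monoExp_apply_one (a b : ℕ) : monoExp a b 1 = b := by simp [monoExp]

@[simp] theorem monoExp_add_single_zero (a b n : ℕ) :
    monoExp a b + Finsupp.single 0 n = monoExp (a + n) b := by
  ext i; fin_cases i <;> simp [monoExp]

@[simp] theorem monoExp_add_single_one (a b n : ℕ) :
    monoExp a b + Finsupp.single 1 n = monoExp a (b + n) := by
  ext i; fin_cases i <;> simp [monoExp]

theorem eq_monoExp (u : Fin 2 →₀ ℕ) : u = monoExp (u 0) (u 1) := by
  ext i; fin_cases i <;> simp

theorem Finsupp.le_iff_fin_two {u v : Fin 2 →₀ ℕ} :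
    u ≤ v ↔ u 0 ≤ v 0 ∧ u 1 ≤ v 1 := by
  simp [Finsupp.le_def, Fin.forall_fin_two]

theorem Finsupp.degree_fin_two (u : Fin 2 →₀ ℕ) : u.degree = u 0 + u 1 := by
  simp [Finsupp.degree_eq_sum, Fin.sum_univ_two]

theorem MvPolynomial.IsHomogeneous.eq_C_mul_X_add_C_mul_X {R : Type*} [CommSemiring R]
    {z : MvPolynomial (Fin 2) R} (hz : z.IsHomogeneous 1) :
    z = C (coeff (Finsupp.single 0 1) z) * X 0 + C (coeff (Finsupp.single 1 1) z) * X 1 := by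
  ext e
  simp only [coeff_add, coeff_C_mul, coeff_X]
  by_cases he : e.degree = 1
  · rw [Finsupp.degree_fin_two] at he
    rw [eq_monoExp e]
    obtain h | h : e 0 = 1 ∧ e 1 = 0 ∨ e 0 = 0 ∧ e 1 = 1 := by omega
    all_goals simp [h, monoExp, Finsupp.single_eq_single_iff]
  · have h0 : Finsupp.single 0 1 ≠ e := fun h => he (h ▸ by simp)
    have h1 : Finsupp.single 1 1 ≠ e := fun h => he (h ▸ by simp)
    simp [hz.coeff_eq_zero he, h0, h1]

theorem IsFull.exists_linearForm {I : Ideal (MvPolynomial (Fin 2) k)} (hI : IsFull I) :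
    ∃ α β : k, (α ≠ 0 ∨ β ≠ 0) ∧
      ∀ p, p * (C α * X 0 + C β * X 1) ∈ I → p * X 0 ∈ I ∧ p * X 1 ∈ I := by
  obtain ⟨z, hz0, hz1, hcolon⟩ := hI
  refine ⟨coeff (Finsupp.single 0 1) z, coeff (Finsupp.single 1 1) z, ?_, fun p hp => ?_⟩
  · by_contra! h
    rw [hz1.eq_C_mul_X_add_C_mul_X, h.1, h.2] at hz0
    simp at hz0
  · rw [← hz1.eq_C_mul_X_add_C_mul_X, ← Ideal.mem_colon_span_singleton, hcolon,
      Submodule.mem_colon] at hp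
    exact ⟨hp _ (Ideal.subset_span (by simp)), hp _ (Ideal.subset_span (by simp))⟩

theorem IsFull.exchange {I : Ideal (MvPolynomial (Fin 2) k)} (hmon : IsMonomialIdeal I)
    (hfull : IsFull I) {a b a' b' : ℕ} (ha : a' < a) (hb : b < b')
    (hA : monomial (monoExp a b) (1 : k) ∈ I) (hB : monomial (monoExp a' b') (1 : k) ∈ I) :
    monomial (monoExp (a - 1) (b + 1)) (1 : k) ∈ I ∨
      monomial (monoExp (a' + 1) (b' - 1)) (1 : k) ∈ I := by
  obtain ⟨α, β, hαβ, hcolon⟩ := hfull.exists_linearForm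
  have left (hα : α ≠ 0)
      (hB' : β = 0 ∨ monomial (monoExp a' (b + (a - a'))) (1 : k) ∈ I) :
      monomial (monoExp (a - 1) (b + 1)) (1 : k) ∈ I := by
    have := hmon.monomial_mem_of_mul_linearForm_mem (i := 0) (j := 1) (by decide) hα
      (fun p hp => (hcolon p hp).2) (e := monoExp a' b) (N := a - a' - 1)
    simp only [monoExp_add_single_zero, monoExp_add_single_one] at this
    convert this ?_ ?_ using 4
    · omega
    · convert hA using 4; omega
    · convert hB' using 6; omega
  have right (hβ : β ≠ 0)
      (hA' : α = 0 ∨ monomial (monoExp (a' + (b' - b)) b) (1 : k) ∈ I) :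
      monomial (monoExp (a' + 1) (b' - 1)) (1 : k) ∈ I := by
    have := hmon.monomial_mem_of_mul_linearForm_mem (i := 1) (j := 0) (by decide) hβ
      (fun p hp => (hcolon p (by rwa [add_comm])).1) (e := monoExp a' b) (N := b' - b - 1)
    simp only [monoExp_add_single_zero, monoExp_add_single_one] at this
    convert this ?_ ?_ using 4
    · omega
    · convert hB using 4; omega
    · convert hA' using 6; omega
  rcases le_total (a' + b') (a + b) with hdeg | hdeg
  · by_cases hα : α = 0
    · exact .inr (right (hαβ.resolve_left (not_not.mpr hα)) (.inl hα))
    · refine .inl (left hα (.inr (monomial_one_mem_of_le hB ?_)))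
      simp only [Finsupp.le_iff_fin_two, monoExp_apply_zero, monoExp_apply_one]; omega
  · by_cases hβ : β = 0
    · exact .inl (left (hαβ.resolve_right (not_not.mpr hβ)) (.inl hβ))
    · refine .inr (right hβ (.inr (monomial_one_mem_of_le hA ?_)))
      simp only [Finsupp.le_iff_fin_two, monoExp_apply_zero, monoExp_apply_one]; omega

theorem IsAntichain.injOn_apply_one {G : Set (Fin 2 →₀ ℕ)} (hG : IsAntichain (· ≤ ·) G) :
    Set.InjOn (fun u => u 1) G := by
  intro u hu v hv h
  rcases le_total (u 0) (v 0) with h0 | h0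
  · exact hG.eq hu hv (Finsupp.le_iff_fin_two.mpr ⟨h0, h.le⟩)
  · exact (hG.eq hv hu (Finsupp.le_iff_fin_two.mpr ⟨h0, h.ge⟩)).symm

theorem IsAntichain.apply_zero_lt_of_apply_one_lt {G : Set (Fin 2 →₀ ℕ)}
    (hG : IsAntichain (· ≤ ·) G) {u v : Fin 2 →₀ ℕ} (hu : u ∈ G) (hv : v ∈ G)
    (h : u 1 < v 1) : v 0 < u 0 := by
  by_contra! h0
  exact h.ne (congrArg (· 1) (hG.eq hu hv (Finsupp.le_iff_fin_two.mpr ⟨h0, h.le⟩)))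

def IsStaircase (s : ℕ) (g : ℕ → Fin 2 →₀ ℕ) : Prop :=
  StrictAntiOn (fun n => g n 0) (Set.Iio s) ∧ StrictMonoOn (fun n => g n 1) (Set.Iio s)

/-- `m ≤ s - 1` rather than `m < s`, so that `m = 0` is allowed when `s = 0`. -/
def IsTurningPoint (s : ℕ) (g : ℕ → Fin 2 →₀ ℕ) (m : ℕ) : Prop :=
  m ≤ s - 1 ∧ (∀ l < m, g (l + 1) 1 = g l 1 + 1) ∧
    ∀ l, m ≤ l → l + 1 < s → g l 0 = g (l + 1) 0 + 1

theorem exists_staircase_enumeration {G : Set (Fin 2 →₀ ℕ)} (hfin : G.Finite)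
    (hG : IsAntichain (· ≤ ·) G) :
    ∃ (s : ℕ) (g : ℕ → Fin 2 →₀ ℕ), g '' Set.Iio s = G ∧ IsStaircase s g := by
  set Y := (fun u : Fin 2 →₀ ℕ => u 1) '' G
  have hY : (Set.ofPred (· ∈ Y)).Finite := hfin.image _
  set g := Function.invFunOn (fun u : Fin 2 →₀ ℕ => u 1) G ∘ Nat.nth (· ∈ Y)
  have hg (n : ℕ) (hn : n < hY.toFinset.card) : g n ∈ G ∧ g n 1 = Nat.nth (· ∈ Y) n :=
    ⟨Function.invFunOn_mem (Nat.nth_mem_of_lt_card hY hn),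
      Function.invFunOn_eq (Nat.nth_mem_of_lt_card hY hn)⟩
  have hy : StrictMonoOn (fun n => g n 1) (Set.Iio hY.toFinset.card) := fun m hm n hn hmn => by
    simpa only [(hg m hm).2, (hg n hn).2] using Nat.nth_strictMonoOn hY hm hn hmn
  refine ⟨_, g, ?_, fun m hm n hn hmn => ?_, hy⟩
  · refine subset_antisymm (Set.image_subset_iff.mpr fun n hn => (hg n hn).1) fun u hu => ?_
    obtain ⟨n, hn, hnu⟩ := Nat.exists_lt_card_finite_nth_eq hY (Set.mem_image_of_mem _ hu)
    exact ⟨n, hn, hG.injOn_apply_one (hg n hn).1 hu ((hg n hn).2.trans hnu)⟩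
  · exact hG.apply_zero_lt_of_apply_one_lt (hg m hm).1 (hg n hn).1 (hy hm hn hmn)

/-- Generators are added by increasing degree, ties broken by the distance to the turning
point `m`; the last component only makes the key injective. -/
def turnKey (g : ℕ → Fin 2 →₀ ℕ) (m n : ℕ) : ℕ ×ₗ ℕ ×ₗ ℕ :=
  toLex ((g n).degree, toLex (m - n + (n - m), n))

theorem turnKey_injective (g : ℕ → Fin 2 →₀ ℕ) (m : ℕ) :
    Function.Injective (turnKey g m) :=
  fun a b h => by simpa [turnKey] using congrArg (fun x => (ofLex (ofLex x).2).2) h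

theorem Tuple.comp_sort_lt_iff {n : ℕ} {α : Type*} [LinearOrder α] {f : Fin n → α}
    (hf : Function.Injective f) {a b : Fin n} :
    f (Tuple.sort f a) < f (Tuple.sort f b) ↔ a < b :=
  ((Tuple.monotone_sort f).strictMono_of_injective (hf.comp (Tuple.sort f).injective)).lt_iff_lt

theorem exists_isTurningPoint {s : ℕ} {g : ℕ → Fin 2 →₀ ℕ}
    (hgap : ∀ i j, i ≤ j → j + 1 < s →
      g (i + 1) 1 = g i 1 + 1 ∨ g j 0 = g (j + 1) 0 + 1) :
    ∃ m, IsTurningPoint s g m := by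
  classical
  by_cases h : ∃ l, l + 1 < s ∧ g (l + 1) 1 ≠ g l 1 + 1
  · refine ⟨Nat.find h, by have := (Nat.find_spec h).1; omega, fun l hl => ?_,
      fun l hl hls => (hgap _ l hl hls).resolve_left (Nat.find_spec h).2⟩
    have := (Nat.find_spec h).1
    by_contra hne
    exact Nat.find_min h hl ⟨by omega, hne⟩
  · push Not at h
    exact ⟨s - 1, le_rfl, fun l hl => h l (by omega), fun l hl hls => by omega⟩

namespace IsStaircase

variable {s m : ℕ} {g : ℕ → Fin 2 →₀ ℕ}

theorem apply_zero_lt (hg : IsStaircase s g) {m n : ℕ} (h : m < n) (hn : n < s) :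
    g n 0 < g m 0 :=
  hg.1 (Set.mem_Iio.2 (h.trans hn)) (Set.mem_Iio.2 hn) h

theorem apply_one_lt (hg : IsStaircase s g) {m n : ℕ} (h : m < n) (hn : n < s) :
    g m 1 < g n 1 :=
  hg.2 (Set.mem_Iio.2 (h.trans hn)) (Set.mem_Iio.2 hn) h

theorem apply_zero_le (hg : IsStaircase s g) {m n : ℕ} (h : m ≤ n) (hn : n < s) :
    g n 0 ≤ g m 0 :=
  hg.1.antitoneOn (Set.mem_Iio.2 (h.trans_lt hn)) (Set.mem_Iio.2 hn) h

theorem apply_one_le (hg : IsStaircase s g) {m n : ℕ} (h : m ≤ n) (hn : n < s) :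
    g m 1 ≤ g n 1 :=
  hg.2.monotoneOn (Set.mem_Iio.2 (h.trans_lt hn)) (Set.mem_Iio.2 hn) h

theorem injOn (hg : IsStaircase s g) : Set.InjOn g (Set.Iio s) :=
  fun _ ha _ hb h => hg.2.injOn ha hb (congrArg (· 1) h)

theorem degree_le_of_le_left (hg : IsStaircase s g) (hm : IsTurningPoint s g m) {l t : ℕ}
    (hlt : l ≤ t) (htm : t ≤ m) : (g t).degree ≤ (g l).degree := by
  induction t, hlt using Nat.le_induction with
  | base => exact le_rfl
  | succ n hln ih =>
    have := hg.apply_zero_lt (show n < n + 1 by omega) (by have := hm.1; omega)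
    have := hm.2.1 n (by omega)
    have := ih (by omega)
    simp only [Finsupp.degree_fin_two] at *
    omega

theorem degree_le_of_le_right (hg : IsStaircase s g) (hm : IsTurningPoint s g m) {t l : ℕ}
    (hmt : m ≤ t) (htl : t ≤ l) (hl : l < s) : (g t).degree ≤ (g l).degree := by
  induction l, htl using Nat.le_induction with
  | base => exact le_rfl
  | succ n htn ih =>
    have := hg.apply_one_lt (show n < n + 1 by omega) hl
    have := hm.2.2 n (by omega) hl
    have := ih (by omega)
    simp only [Finsupp.degree_fin_two] at *
    omega

theorem turnKey_lt_left (hg : IsStaircase s g) (hm : IsTurningPoint s g m) {l t : ℕ}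
    (hlt : l < t) (htm : t ≤ m) : turnKey g m t < turnKey g m l :=
  Prod.Lex.toLex_lt_toLex'.2 ⟨hg.degree_le_of_le_left hm hlt.le htm,
    fun _ => Prod.Lex.toLex_lt_toLex.2 (.inl (by omega))⟩

theorem turnKey_lt_right (hg : IsStaircase s g) (hm : IsTurningPoint s g m) {t l : ℕ}
    (hmt : m ≤ t) (htl : t < l) (hl : l < s) : turnKey g m t < turnKey g m l :=
  Prod.Lex.toLex_lt_toLex'.2 ⟨hg.degree_le_of_le_right hm hmt htl.le hl,
    fun _ => Prod.Lex.toLex_lt_toLex.2 (.inl (by omega))⟩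

theorem lt_of_turnKey_lt_left (hg : IsStaircase s g) (hm : IsTurningPoint s g m) {n t : ℕ}
    (h : turnKey g m n < turnKey g m t) (htm : t ≤ m) : t < n := by
  by_contra! hnt
  rcases hnt.lt_or_eq with hnt | rfl
  · exact (hg.turnKey_lt_left hm hnt htm).asymm h
  · exact h.false

theorem lt_of_turnKey_lt_right (hg : IsStaircase s g) (hm : IsTurningPoint s g m) {n t : ℕ}
    (h : turnKey g m n < turnKey g m t) (hmt : m ≤ t) (hn : n < s) : n < t := by
  by_contra! htn
  rcases htn.lt_or_eq with htn | rfl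
  · exact (hg.turnKey_lt_right hm hmt htn hn).asymm h
  · exact h.false

theorem exists_linearQuotient_of_turnKey_lt (hg : IsStaircase s g) (hm : IsTurningPoint s g m)
    {t p : ℕ} (ht : t < s) (hp : p < s) (hpt : turnKey g m p < turnKey g m t) :
    ∃ i : Fin 2,
      (∃ n < s, turnKey g m n < turnKey g m t ∧ g n ≤ g t + Finsupp.single i 1) ∧
      ∀ n < s, turnKey g m n < turnKey g m t → g t i < g n i := by
  have := hm.1
  rcases lt_trichotomy t m with htm | rfl | hmt
  · refine ⟨1, ⟨t + 1, by omega, hg.turnKey_lt_left hm (by omega) (by omega), ?_⟩,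
      fun n hn hnt => hg.apply_one_lt (hg.lt_of_turnKey_lt_left hm hnt htm.le) hn⟩
    have := hg.apply_zero_le (show t ≤ t + 1 by omega) (by omega)
    have := hm.2.1 t htm
    simp only [Finsupp.le_iff_fin_two, Finsupp.coe_add, Pi.add_apply, Finsupp.single_eq_same,
      Finsupp.single_eq_of_ne zero_ne_one, add_zero]
    omega
  · exact absurd (hg.lt_of_turnKey_lt_left hm hpt le_rfl)
      (hg.lt_of_turnKey_lt_right hm hpt le_rfl hp).asymm
  · refine ⟨0, ⟨t - 1, by omega, hg.turnKey_lt_right hm (by omega) (by omega) ht, ?_⟩,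
      fun n hn hnt => hg.apply_zero_lt (hg.lt_of_turnKey_lt_right hm hnt hmt.le hn) ht⟩
    have := hg.apply_one_le (show t - 1 ≤ t by omega) ht
    have := hm.2.2 (t - 1) (by omega) (by omega)
    rw [show t - 1 + 1 = t by omega] at this
    simp only [Finsupp.le_iff_fin_two, Finsupp.coe_add, Pi.add_apply, Finsupp.single_eq_same,
      Finsupp.single_eq_of_ne one_ne_zero, add_zero]
    omega

theorem exists_perm_linearQuotients (hg : IsStaircase s g) (hm : IsTurningPoint s g m) :
    ∃ σ : Equiv.Perm (Fin s), Monotone (fun l => (g (σ l)).degree) ∧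
      ∀ j (hj : j + 1 < s), ∃ i : Fin 2,
        (∃ l : Fin s, l.val ≤ j ∧
          g (σ l) ≤ g (σ ⟨j + 1, hj⟩) + Finsupp.single i 1) ∧
        ∀ l : Fin s, l.val ≤ j → g (σ ⟨j + 1, hj⟩) i < g (σ l) i := by
  set κ : Fin s → ℕ ×ₗ ℕ ×ₗ ℕ := fun n => turnKey g m n
  have hκ : Function.Injective κ := fun a b h => Fin.ext (turnKey_injective g m h)
  set σ := Tuple.sort κ
  refine ⟨σ, fun a b hab => Prod.Lex.monotone_fst _ _ (Tuple.monotone_sort κ hab),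
    fun j hj => ?_⟩
  have hbefore (l : Fin s) : l.val ≤ j ↔ κ (σ l) < κ (σ ⟨j + 1, hj⟩) := by
    rw [Tuple.comp_sort_lt_iff hκ, Fin.lt_def]
    exact Nat.lt_succ_iff.symm
  obtain ⟨i, ⟨n, hn, hnt, hle⟩, hlt⟩ := hg.exists_linearQuotient_of_turnKey_lt hm
    (σ ⟨j + 1, hj⟩).isLt (σ ⟨0, by omega⟩).isLt ((hbefore _).1 (Nat.zero_le j))
  refine ⟨i, ⟨σ.symm ⟨n, hn⟩, (hbefore _).2 ?_, ?_⟩,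
    fun l hl => hlt _ (σ l).isLt ((hbefore l).1 hl)⟩
  · simpa [κ] using hnt
  · simpa using hle

end IsStaircase

theorem IsFull.yStep_or_xStep {I : Ideal (MvPolynomial (Fin 2) k)} (hmon : IsMonomialIdeal I)
    (hfull : IsFull I) {s : ℕ} {g : ℕ → Fin 2 →₀ ℕ} (hg : IsStaircase s g)
    (hmem : ∀ e, monomial e (1 : k) ∈ I ↔ ∃ n < s, g n ≤ e) {i j : ℕ} (hij : i ≤ j)
    (hj : j + 1 < s) : g (i + 1) 1 = g i 1 + 1 ∨ g j 0 = g (j + 1) 0 + 1 := by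
  by_contra! ⟨hyi, hxj⟩
  have hyi' := hg.apply_one_lt (show i < i + 1 by omega) (by omega)
  have hxj' := hg.apply_zero_lt (show j < j + 1 by omega) hj
  have hgen (n : ℕ) (hn : n < s) : monomial (monoExp (g n 0) (g n 1)) (1 : k) ∈ I := by
    rw [← eq_monoExp]; exact (hmem _).2 ⟨n, hn, le_rfl⟩
  rcases hfull.exchange hmon (hg.apply_zero_lt (by omega) hj) (hg.apply_one_lt (by omega) hj)
    (hgen i (by omega)) (hgen (j + 1) hj) with h | h <;>
  obtain ⟨n, hn, hle⟩ := (hmem _).1 h <;>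
  simp only [Finsupp.le_iff_fin_two, monoExp_apply_zero, monoExp_apply_one] at hle
  · rcases le_or_gt n i with hni | hin
    · have := hg.apply_zero_le hni (by omega)
      have := hg.apply_zero_lt (show i < j + 1 by omega) hj
      omega
    · have := hg.apply_one_le (show i + 1 ≤ n by omega) hn
      omega
  · rcases le_or_gt n j with hnj | hjn
    · have := hg.apply_zero_le hnj (by omega)
      omega
    · have := hg.apply_one_le (show j + 1 ≤ n by omega) hn
      have := hg.apply_one_lt (show i < j + 1 by omega) hj
      omega

theorem linear_quotients_order_general {k : Type*} [Field k]
    (I : Ideal (MvPolynomial (Fin 2) k))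
    (hmon : IsMonomialIdeal I) (hfull : IsFull I) :
    ∃ (s : ℕ) (f : Fin s → MvPolynomial (Fin 2) k),
      Function.Injective f ∧
      Set.range f = minimalMonomialGens I ∧
      (∀ i j : Fin s, i ≤ j → (f i).totalDegree ≤ (f j).totalDegree) ∧
      ∀ j : ℕ, ∀ hj : j + 1 < s,
        ∃ i : Fin 2,
          Submodule.colon (Ideal.span (f '' {l : Fin s | l.val ≤ j}))
              (Ideal.span {f ⟨j + 1, hj⟩}) =
            Ideal.span {X i} := by
  obtain ⟨s, g, hrange, hg⟩ :=
    exists_staircase_enumeration (minimalExponents_finite I) (minimalExponents_isAntichain I)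
  have hmem (e : Fin 2 →₀ ℕ) : monomial e (1 : k) ∈ I ↔ ∃ n < s, g n ≤ e := by
    simp [monomial_mem_iff_exists_minimalExponents_le, ← hrange]
  obtain ⟨m, hm⟩ :=
    exists_isTurningPoint fun i j hij hj => hfull.yStep_or_xStep hmon hg hmem hij hj
  obtain ⟨σ, hdeg, hcolon⟩ := hg.exists_perm_linearQuotients hm
  refine ⟨s, fun l => monomial (g (σ l)) 1, fun a b h => ?_, ?_, fun a b hab => ?_,
    fun j hj => ?_⟩
  · exact σ.injective (Fin.ext (hg.injOn (σ a).isLt (σ b).isLt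
      (monomial_left_injective one_ne_zero h)))
  · rw [minimalMonomialGens_eq_image, ← hrange, ← Fin.range_val, ← Set.range_comp,
      ← Set.range_comp]
    exact σ.surjective.range_comp ((fun a => monomial a (1 : k)) ∘ g ∘ Fin.val)
  · simpa only [totalDegree_monomial_one] using hdeg hab
  · obtain ⟨i, ⟨l, hl, hle⟩, hlt⟩ := hcolon j hj
    refine ⟨i, ?_⟩
    rw [← Set.image_image (fun a => monomial a (1 : k)) (fun l => g (σ l))]
    exact colon_span_monomial_eq_span_X ⟨_, ⟨l, hl, rfl⟩, hle⟩
      (by rintro _ ⟨l, hl, rfl⟩; exact hlt l hl)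

theorem linear_quotients_order {k : Type*} [Field k] [Infinite k]
    (I : Ideal (MvPolynomial (Fin 2) k))
    (hI0 : I ≠ ⊥) (hItop : I ≠ ⊤)
    (hmon : IsMonomialIdeal I) (hfull : IsFull I) :
    ∃ (s : ℕ) (f : Fin s → MvPolynomial (Fin 2) k),
      Function.Injective f ∧
      Set.range f = minimalMonomialGens I ∧
      (∀ i j : Fin s, i ≤ j → (f i).totalDegree ≤ (f j).totalDegree) ∧
      ∀ j : ℕ, ∀ hj : j + 1 < s,
        ∃ i : Fin 2,
          Submodule.colon (Ideal.span (f '' {l : Fin s | l.val ≤ j}))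
              (Ideal.span {f ⟨j + 1, hj⟩}) =
            Ideal.span {X i} :=
  linear_quotients_order_general I hmon hfull
end
end

section
/- Let k be an infinite field and R = k[x,y] with homogeneous maximal ideal 𝔪 = (x,y). Let I and J be nonzero proper homogeneous ideals of R such that I + J is full. Then max{o(I), o(J)} ≤ o(I ∩ J) ≤ max{o(I), o(J)} + 1. -/
/-!
Let `d = max (o I) (o J)`. The lower bound holds because `I ∩ J` lies in both ideals, and for
`d = 0` the upper bound follows from `o (I ∩ J) ≤ o I + o J`. So let `d = n + 1` and suppose
`I ∩ J` has no nonzero form of degree `≤ n + 2`. The Koszul relation between `v x` and `v y`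
then splits every form `v` of degree `n` in `(I + J) : 𝔪` as `r + s` with `r ∈ I : 𝔪` and
`s ∈ J : 𝔪`, and fullness puts every `v` with `z v ∈ I + J` into `(I + J) : 𝔪`.

For a form `z v ∈ I` of degree `n + 1` the splitting gives `z s ∈ I ∩ J`, so `s = 0` and
`x v, y v ∈ I`. Hence if `z` divided every form of degree `n + 1` in `I`, it would divide them
to every power, which is absurd; so `I` and likewise `J` contain forms `f` and `g` of degree
`n + 1` not divisible by `z`. Modulo the linear form `z` any two forms of the same degree are
proportional, so `g - γ f = z v`. Splitting `v = r + s` makes `g - z s = z r + γ f` a form of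
degree `n + 1` in `I ∩ J`, so `g = z s`: a contradiction.
-/

open MvPolynomial

noncomputable section

variable {k : Type*} [Field k]

namespace MvPolynomial

variable {σ R : Type*}

theorem IsHomogeneous.homogeneousComponent_mul [CommSemiring R] {w : MvPolynomial σ R}
    {e : ℕ} (hw : w.IsHomogeneous e) (v : MvPolynomial σ R) (n : ℕ) :
    homogeneousComponent (e + n) (w * v) = w * homogeneousComponent n v := by
  conv_lhs => rw [← v.sum_homogeneousComponent, Finset.mul_sum, map_sum]
  have hcomp : ∀ i, homogeneousComponent (e + n) (w * homogeneousComponent i v)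
      = if i = n then w * homogeneousComponent i v else 0 := by
    intro i
    rw [homogeneousComponent_of_mem (hw.mul (homogeneousComponent_isHomogeneous i v))]
    exact if_congr (by omega) rfl rfl
  simp_rw [hcomp, Finset.sum_ite_eq', Finset.mem_range]
  split_ifs with hn
  · rfl
  · rw [homogeneousComponent_eq_zero _ _ (by omega), mul_zero]

theorem IsHomogeneous.of_mul_left [CommRing R] [IsDomain R] {w v : MvPolynomial σ R}
    {e n : ℕ} (hw : w.IsHomogeneous e) (hw0 : w ≠ 0) (h : (w * v).IsHomogeneous (e + n)) :
    v.IsHomogeneous n := by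
  have : w * homogeneousComponent n v = w * v := by
    rw [← hw.homogeneousComponent_mul, homogeneousComponent_eq_self h]
  rw [← mul_left_cancel₀ hw0 this]
  exact homogeneousComponent_isHomogeneous n v

theorem IsHomogeneous.not_pow_succ_dvd [CommRing R] [IsDomain R] {z p : MvPolynomial σ R}
    {m : ℕ} (hz : z.IsHomogeneous 1) (hz0 : z ≠ 0) (hp : p.IsHomogeneous m) (hp0 : p ≠ 0) :
    ¬ z ^ (m + 1) ∣ p := by
  rintro ⟨u, rfl⟩
  have hzm : z ^ (m + 1) ≠ 0 := pow_ne_zero _ hz0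
  have hu : u ≠ 0 := right_ne_zero_of_mul hp0
  have hdeg := hp.totalDegree hp0
  rw [totalDegree_mul_of_isDomain hzm hu, (hz.pow (m + 1)).totalDegree hzm] at hdeg
  omega

theorem IsHomogeneous.aeval_algebraMap_mul [CommSemiring R] {S : Type*} [CommSemiring S]
    [Algebra R S] {h : MvPolynomial σ R} {m : ℕ} (hh : h.IsHomogeneous m) (p : σ → R)
    (w : S) :
    MvPolynomial.aeval (fun i => algebraMap R S (p i) * w) h =
      algebraMap R S (eval p h) * w ^ m := by
  rw [aeval_def, eval₂_eq, eval_eq, map_sum, Finset.sum_mul]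
  refine Finset.sum_congr rfl fun d hd => ?_
  rw [hh.degree_eq_sum_deg_support hd, ← Finset.prod_pow_eq_pow_sum]
  simp only [map_mul, map_prod, map_pow, mul_pow, Finset.prod_mul_distrib, mul_assoc]

theorem IsHomogeneous.dvd_sub_C_eval_mul_pow [CommRing R] {z W h : MvPolynomial σ R}
    {p : σ → R} {m : ℕ} (hdvd : ∀ i, z ∣ X i - C (p i) * W) (hh : h.IsHomogeneous m) :
    z ∣ h - C (eval p h) * W ^ m := by
  let π := Ideal.Quotient.mkₐ R (Ideal.span {z})
  have hπ : π.comp (MvPolynomial.aeval fun i => C (p i) * W) = π := by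
    refine algHom_ext fun i => ?_
    simp only [AlgHom.comp_apply, aeval_X]
    exact Ideal.Quotient.eq.mpr
      (Ideal.mem_span_singleton.mpr (by simpa using (hdvd i).neg_right))
  have := DFunLike.congr_fun hπ h
  rw [AlgHom.comp_apply, ← algebraMap_eq, hh.aeval_algebraMap_mul] at this
  rw [← Ideal.mem_span_singleton]
  exact Ideal.Quotient.eq.mp this.symm

section LinearForm

variable {z : MvPolynomial (Fin 2) k}

theorem exists_eq_C_mul_X_add_C_mul_X (hz : z.IsHomogeneous 1) :
    ∃ a b : k, z = C a * X 0 + C b * X 1 := by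
  have hz' : z ∈ Submodule.span k (Set.range X) := by
    rw [← homogeneousSubmodule_one_eq_span_X]
    exact hz
  obtain ⟨c, hc⟩ := (Submodule.mem_span_range_iff_exists_fun k).mp hz'
  exact ⟨c 0, c 1, by rw [← hc, Fin.sum_univ_two, smul_eq_C_mul, smul_eq_C_mul]⟩

theorem mem_maxIdeal_of_isHomogeneous_one (hz : z.IsHomogeneous 1) : z ∈ maxIdeal k := by
  obtain ⟨a, b, rfl⟩ := exists_eq_C_mul_X_add_C_mul_X hz
  exact add_mem (Ideal.mul_mem_left _ _ (Ideal.subset_span (by simp)))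
    (Ideal.mul_mem_left _ _ (Ideal.subset_span (by simp)))

theorem prime_of_isHomogeneous_one (hz : z.IsHomogeneous 1) (hz0 : z ≠ 0) : Prime z := by
  refine (irreducible_of_totalDegree_eq_one (hz.totalDegree hz0) fun x hx => ?_).prime
  obtain ⟨d, hd⟩ := ne_zero_iff.mp hz0
  exact isUnit_iff_ne_zero.mpr (by rintro rfl; exact hd (zero_dvd_iff.mp (hx d)))

theorem exists_not_dvd_X (hz : z.IsHomogeneous 1) (hz0 : z ≠ 0) : ∃ i, ¬ z ∣ X i := by
  obtain ⟨a, b, rfl⟩ := exists_eq_C_mul_X_add_C_mul_X hz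
  by_contra! h
  have hvanish : ∀ i, eval ![b, -a] (X i) = 0 := fun i => by
    obtain ⟨u, hu⟩ := h i
    simp [hu, mul_comm]
  have ha := hvanish 1
  have hb := hvanish 0
  simp only [eval_X, Matrix.cons_val_one, Matrix.cons_val_zero, neg_eq_zero] at ha hb
  simp [ha, hb] at hz0

theorem exists_forall_dvd_X_sub_C_mul (hz : z.IsHomogeneous 1) (hz0 : z ≠ 0) :
    ∃ (p : Fin 2 → k) (W : MvPolynomial (Fin 2) k), ∀ i, z ∣ X i - C (p i) * W := by
  obtain ⟨a, b, rfl⟩ := exists_eq_C_mul_X_add_C_mul_X hz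
  by_cases hb : b = 0
  · have ha : a ≠ 0 := by rintro rfl; simp [hb] at hz0
    refine ⟨![0, 1], X 1, Fin.forall_fin_two.mpr ⟨⟨C a⁻¹, ?_⟩, ⟨0, by simp⟩⟩⟩
    simp only [hb, Matrix.cons_val_zero, map_zero, zero_mul, sub_zero, add_zero,
      mul_right_comm _ (X _), ← C_mul, mul_inv_cancel₀ ha, C_1, one_mul]
  · refine ⟨![1, -(a / b)], X 0,
      Fin.forall_fin_two.mpr ⟨⟨0, by simp⟩, ⟨C b⁻¹, ?_⟩⟩⟩
    simp only [Matrix.cons_val_one, Matrix.cons_val_zero, add_mul, mul_right_comm _ (X _),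
      ← C_mul, mul_inv_cancel₀ hb, C_1, one_mul, C_neg, div_eq_mul_inv]
    ring

theorem exists_dvd_sub_C_mul (hz : z.IsHomogeneous 1) (hz0 : z ≠ 0)
    {f g : MvPolynomial (Fin 2) k} {m : ℕ} (hf : f.IsHomogeneous m) (hg : g.IsHomogeneous m)
    (hzf : ¬ z ∣ f) : ∃ γ : k, z ∣ g - C γ * f := by
  obtain ⟨p, W, hdvd⟩ := exists_forall_dvd_X_sub_C_mul hz hz0
  have hf' := hf.dvd_sub_C_eval_mul_pow hdvd
  have hfp : eval p f ≠ 0 := fun h0 => hzf (by simpa [h0] using hf')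
  refine ⟨eval p g / eval p f, ?_⟩
  have hsplit : g - C (eval p g / eval p f) * f = (g - C (eval p g) * W ^ m)
      - C (eval p g / eval p f) * (f - C (eval p f) * W ^ m) := by
    rw [mul_sub, ← mul_assoc, ← C_mul, div_mul_cancel₀ _ hfp]
    ring
  rw [hsplit]
  exact dvd_sub (hg.dvd_sub_C_eval_mul_pow hdvd) (dvd_mul_of_dvd_right hf' _)

end LinearForm

end MvPolynomial

section HomogeneousIdeal

variable {σ : Type*} {I A B : Ideal (MvPolynomial σ k)}

theorem IsHomogeneousIdeal.inf (hA : IsHomogeneousIdeal A) (hB : IsHomogeneousIdeal B) :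
    IsHomogeneousIdeal (A ⊓ B) :=
  fun p hp d => ⟨hA p hp.1 d, hB p hp.2 d⟩

theorem IsHomogeneousIdeal.exists_add_eq_of_mem_add (hA : IsHomogeneousIdeal A)
    (hB : IsHomogeneousIdeal B) {p : MvPolynomial σ k} {m : ℕ} (hp : p ∈ A + B)
    (hpm : p.IsHomogeneous m) :
    ∃ a ∈ A, ∃ b ∈ B, a.IsHomogeneous m ∧ b.IsHomogeneous m ∧ p = a + b := by
  obtain ⟨a, ha, b, hb, rfl⟩ := Submodule.mem_sup.mp hp
  exact ⟨_, hA a ha m, _, hB b hb m, homogeneousComponent_isHomogeneous m a,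
    homogeneousComponent_isHomogeneous m b, by rw [← map_add, homogeneousComponent_eq_self hpm]⟩

theorem IsHomogeneousIdeal.exists_isHomogeneous_ne_zero (hI : IsHomogeneousIdeal I)
    (hI0 : I ≠ ⊥) : ∃ d, ∃ p ∈ I, p ≠ 0 ∧ p.IsHomogeneous d := by
  obtain ⟨p, hp, hp0⟩ := (Submodule.ne_bot_iff I).mp hI0
  obtain ⟨d, hd⟩ : ∃ d, homogeneousComponent d p ≠ 0 := by
    by_contra! h
    exact hp0 (by rw [← p.sum_homogeneousComponent]; exact Finset.sum_eq_zero fun i _ => h i)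
  exact ⟨d, _, hI p hp d, hd, homogeneousComponent_isHomogeneous d p⟩

end HomogeneousIdeal

section Order

variable {I A B : Ideal (MvPolynomial (Fin 2) k)} {p : MvPolynomial (Fin 2) k} {d : ℕ}

theorem ordDeg_le (hp : p ∈ I) (hp0 : p ≠ 0) (hpd : p.IsHomogeneous d) : ordDeg I ≤ d :=
  Nat.sInf_le ⟨p, hp, hp0, hpd⟩

theorem eq_zero_of_lt_ordDeg (hp : p ∈ I) (hpd : p.IsHomogeneous d) (hd : d < ordDeg I) :
    p = 0 := by
  by_contra hp0
  exact absurd (ordDeg_le hp hp0 hpd) (not_le.mpr hd)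

theorem IsHomogeneousIdeal.exists_isHomogeneous_ordDeg (hI : IsHomogeneousIdeal I)
    (hI0 : I ≠ ⊥) : ∃ p ∈ I, p ≠ 0 ∧ p.IsHomogeneous (ordDeg I) :=
  Nat.sInf_mem (hI.exists_isHomogeneous_ne_zero hI0)

theorem IsHomogeneousIdeal.exists_isHomogeneous_of_ordDeg_le (hI : IsHomogeneousIdeal I)
    (hI0 : I ≠ ⊥) (hd : ordDeg I ≤ d) : ∃ p ∈ I, p ≠ 0 ∧ p.IsHomogeneous d := by
  obtain ⟨p, hp, hp0, hpd⟩ := hI.exists_isHomogeneous_ordDeg hI0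
  refine ⟨X 0 ^ (d - ordDeg I) * p, I.mul_mem_left _ hp,
    mul_ne_zero (pow_ne_zero _ (X_ne_zero _)) hp0, ?_⟩
  simpa [Nat.sub_add_cancel hd] using (isHomogeneous_X_pow (0 : Fin 2) (d - ordDeg I)).mul hpd

theorem ordDeg_inf_le_add (hA : IsHomogeneousIdeal A) (hB : IsHomogeneousIdeal B)
    (hA0 : A ≠ ⊥) (hB0 : B ≠ ⊥) : ordDeg (A ⊓ B) ≤ ordDeg A + ordDeg B := by
  obtain ⟨f, hf, hf0, hfd⟩ := hA.exists_isHomogeneous_ordDeg hA0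
  obtain ⟨g, hg, hg0, hgd⟩ := hB.exists_isHomogeneous_ordDeg hB0
  exact ordDeg_le ⟨A.mul_mem_right g hf, B.mul_mem_left f hg⟩ (mul_ne_zero hf0 hg0)
    (hfd.mul hgd)

theorem max_ordDeg_le_ordDeg_inf (hA : IsHomogeneousIdeal A) (hB : IsHomogeneousIdeal B)
    (hA0 : A ≠ ⊥) (hB0 : B ≠ ⊥) : max (ordDeg A) (ordDeg B) ≤ ordDeg (A ⊓ B) := by
  have hAB0 : A ⊓ B ≠ ⊥ := fun h =>
    (Ideal.mul_eq_bot.mp (eq_bot_iff.mpr (h ▸ Ideal.mul_le_inf))).elim hA0 hB0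
  obtain ⟨p, hp, hp0, hpd⟩ := (hA.inf hB).exists_isHomogeneous_ordDeg hAB0
  exact max_le (ordDeg_le hp.1 hp0 hpd) (ordDeg_le hp.2 hp0 hpd)

end Order

section Colon

variable {I : Ideal (MvPolynomial (Fin 2) k)} {r : MvPolynomial (Fin 2) k}

theorem mem_colon_maxIdeal : r ∈ I.colon (maxIdeal k) ↔ ∀ i, r * X i ∈ I := by
  simp [maxIdeal, Submodule.mem_colon, Fin.forall_fin_two]

theorem mul_mem_of_mem_colon_maxIdeal (hr : r ∈ I.colon (maxIdeal k))
    {z : MvPolynomial (Fin 2) k} (hz : z.IsHomogeneous 1) : r * z ∈ I :=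
  Submodule.mem_colon.mp hr z (mem_maxIdeal_of_isHomogeneous_one hz)

end Colon

section FullSum

variable {A B : Ideal (MvPolynomial (Fin 2) k)} {z : MvPolynomial (Fin 2) k} {n : ℕ}

theorem exists_add_eq_of_mem_colon_maxIdeal (hA : IsHomogeneousIdeal A)
    (hB : IsHomogeneousIdeal B) (hn : n + 2 < ordDeg (A ⊓ B)) {v : MvPolynomial (Fin 2) k}
    (hv : v.IsHomogeneous n) (hvm : v ∈ (A + B).colon (maxIdeal k)) :
    ∃ r ∈ A.colon (maxIdeal k), ∃ s ∈ B.colon (maxIdeal k),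
      s.IsHomogeneous n ∧ v = r + s := by
  rw [mem_colon_maxIdeal] at hvm
  have hvX : ∀ i, (v * X i).IsHomogeneous (n + 1) := fun i => hv.mul (isHomogeneous_X k i)
  obtain ⟨p₀, hp₀, q₀, hq₀, hp₀d, -, h₀⟩ := hA.exists_add_eq_of_mem_add hB (hvm 0) (hvX 0)
  obtain ⟨p₁, hp₁, q₁, hq₁, hp₁d, -, h₁⟩ := hA.exists_add_eq_of_mem_add hB (hvm 1) (hvX 1)
  -- The Koszul relation between `v * X 0` and `v * X 1` puts this element in `A ⊓ B`.
  have hsyz : p₀ * X 1 - p₁ * X 0 = 0 := by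
    have hpq : p₀ * X 1 - p₁ * X 0 = q₁ * X 0 - q₀ * X 1 := by
      linear_combination (X 0 : MvPolynomial (Fin 2) k) * h₁ - X 1 * h₀
    refine eq_zero_of_lt_ordDeg (I := A ⊓ B) (Ideal.mem_inf.mpr ⟨?_, ?_⟩)
      ((hp₀d.mul (isHomogeneous_X k 1)).sub (hp₁d.mul (isHomogeneous_X k 0))) hn
    · exact sub_mem (A.mul_mem_right _ hp₀) (A.mul_mem_right _ hp₁)
    · rw [hpq]
      exact sub_mem (B.mul_mem_right _ hq₁) (B.mul_mem_right _ hq₀)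
  obtain ⟨r, rfl⟩ : X 0 ∣ p₀ := by
    have hdvd : X 0 ∣ p₀ * X 1 := ⟨p₁, by linear_combination hsyz⟩
    exact (X_prime.dvd_or_dvd hdvd).resolve_right (by simp)
  have hp₁r : p₁ = r * X 1 :=
    mul_left_cancel₀ (X_ne_zero (0 : Fin 2)) (by linear_combination -hsyz)
  have hr : r.IsHomogeneous n :=
    (isHomogeneous_X k 0).of_mul_left (X_ne_zero _) (by rwa [add_comm])
  refine ⟨r, mem_colon_maxIdeal.mpr (Fin.forall_fin_two.mpr ⟨by rwa [mul_comm], hp₁r ▸ hp₁⟩),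
    v - r, mem_colon_maxIdeal.mpr (Fin.forall_fin_two.mpr ⟨?_, ?_⟩), hv.sub hr, by ring⟩
  · convert hq₀ using 1
    linear_combination h₀
  · convert hq₁ using 1
    linear_combination h₁ + hp₁r

theorem pow_dvd_of_forall_dvd_of_colon_eq (hA : IsHomogeneousIdeal A)
    (hB : IsHomogeneousIdeal B)
    (hfull : (A + B).colon (Ideal.span {z}) = (A + B).colon (maxIdeal k))
    (hz : z.IsHomogeneous 1) (hz0 : z ≠ 0) (hn : n + 2 < ordDeg (A ⊓ B))
    (hdvd : ∀ g ∈ A, g.IsHomogeneous (n + 1) → z ∣ g) (j : ℕ) :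
    ∀ g ∈ A, g.IsHomogeneous (n + 1) → z ^ j ∣ g := by
  induction j with
  | zero => simp
  | succ j ih =>
    intro g hg hgd
    obtain ⟨v, rfl⟩ := hdvd g hg hgd
    have hv : v.IsHomogeneous n := hz.of_mul_left hz0 (by rwa [add_comm])
    have hvm : v ∈ (A + B).colon (maxIdeal k) := by
      rw [← hfull, Ideal.mem_colon_span_singleton, mul_comm]
      exact Submodule.mem_sup_left hg
    obtain ⟨r, hr, s, hs, hsd, rfl⟩ := exists_add_eq_of_mem_colon_maxIdeal hA hB hn hv hvm
    have hsz : s * z = 0 := by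
      refine eq_zero_of_lt_ordDeg (I := A ⊓ B)
        (Ideal.mem_inf.mpr ⟨?_, mul_mem_of_mem_colon_maxIdeal hs hz⟩) (hsd.mul hz) (by omega)
      convert sub_mem hg (mul_mem_of_mem_colon_maxIdeal hr hz) using 1
      ring
    obtain rfl : s = 0 := (mul_eq_zero.mp hsz).resolve_right hz0
    rw [add_zero] at hv ⊢
    obtain ⟨i, hi⟩ := exists_not_dvd_X hz hz0
    have hrX := ih _ (mem_colon_maxIdeal.mp hr i) (hv.mul (isHomogeneous_X k i))
    rw [pow_succ']
    exact mul_dvd_mul_left z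
      ((prime_of_isHomogeneous_one hz hz0).pow_dvd_of_dvd_mul_right j hi hrX)

theorem exists_not_dvd_of_colon_eq (hA : IsHomogeneousIdeal A)
    (hB : IsHomogeneousIdeal B)
    (hfull : (A + B).colon (Ideal.span {z}) = (A + B).colon (maxIdeal k))
    (hz : z.IsHomogeneous 1) (hz0 : z ≠ 0) (hn : n + 2 < ordDeg (A ⊓ B))
    {f : MvPolynomial (Fin 2) k} (hf : f ∈ A) (hf0 : f ≠ 0) (hfd : f.IsHomogeneous (n + 1)) :
    ∃ g ∈ A, g.IsHomogeneous (n + 1) ∧ ¬ z ∣ g := by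
  by_contra! h
  exact hz.not_pow_succ_dvd hz0 hfd hf0
    (pow_dvd_of_forall_dvd_of_colon_eq hA hB hfull hz hz0 hn h _ f hf hfd)

theorem ordDeg_inf_le_of_colon_eq (hA : IsHomogeneousIdeal A) (hB : IsHomogeneousIdeal B)
    (hfull : (A + B).colon (Ideal.span {z}) = (A + B).colon (maxIdeal k))
    (hz : z.IsHomogeneous 1) (hz0 : z ≠ 0)
    (hAn : ∃ f ∈ A, f ≠ 0 ∧ f.IsHomogeneous (n + 1))
    (hBn : ∃ g ∈ B, g ≠ 0 ∧ g.IsHomogeneous (n + 1)) :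
    ordDeg (A ⊓ B) ≤ n + 2 := by
  by_contra! hn
  obtain ⟨f₀, hf₀, hf₀0, hf₀d⟩ := hAn
  obtain ⟨g₀, hg₀, hg₀0, hg₀d⟩ := hBn
  obtain ⟨f, hf, hfd, hzf⟩ := exists_not_dvd_of_colon_eq hA hB hfull hz hz0 hn hf₀ hf₀0 hf₀d
  obtain ⟨g, hg, hgd, hzg⟩ := exists_not_dvd_of_colon_eq hB hA
    (by rwa [add_comm]) hz hz0 (by rwa [inf_comm]) hg₀ hg₀0 hg₀d
  obtain ⟨γ, v, hv⟩ := exists_dvd_sub_C_mul hz hz0 hfd hgd hzf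
  have hvd : v.IsHomogeneous n :=
    hz.of_mul_left hz0 (by rw [add_comm, ← hv]; exact hgd.sub (hfd.C_mul γ))
  have hvm : v ∈ (A + B).colon (maxIdeal k) := by
    rw [← hfull, Ideal.mem_colon_span_singleton, mul_comm, ← hv]
    exact sub_mem (Submodule.mem_sup_right hg) (Submodule.mem_sup_left (A.mul_mem_left _ hf))
  obtain ⟨r, hr, s, hs, hsd, rfl⟩ := exists_add_eq_of_mem_colon_maxIdeal hA hB hn hvd hvm
  have hgs : g - s * z = 0 := by
    refine eq_zero_of_lt_ordDeg (I := A ⊓ B) (Ideal.mem_inf.mpr ⟨?_, ?_⟩)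
      (hgd.sub (hsd.mul hz)) (by omega)
    · convert add_mem (mul_mem_of_mem_colon_maxIdeal hr hz) (A.mul_mem_left (C γ) hf) using 1
      linear_combination hv
    · exact sub_mem hg (mul_mem_of_mem_colon_maxIdeal hs hz)
  exact hzg ⟨s, by linear_combination hgs⟩

end FullSum

theorem order_of_intersection_of_full_sum_general {k : Type*} [Field k]
    (I J : Ideal (MvPolynomial (Fin 2) k))
    (hI0 : I ≠ ⊥) (hJ0 : J ≠ ⊥)
    (hIhom : IsHomogeneousIdeal I) (hJhom : IsHomogeneousIdeal J)
    (hfull : IsFull (I + J)) :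
    max (ordDeg I) (ordDeg J) ≤ ordDeg (I ⊓ J) ∧
      ordDeg (I ⊓ J) ≤ max (ordDeg I) (ordDeg J) + 1 := by
  refine ⟨max_ordDeg_le_ordDeg_inf hIhom hJhom hI0 hJ0, ?_⟩
  obtain ⟨z, hz0, hz, hcolon⟩ := hfull
  cases hmax : max (ordDeg I) (ordDeg J) with
  | zero =>
    have := ordDeg_inf_le_add hIhom hJhom hI0 hJ0
    omega
  | succ n =>
    exact ordDeg_inf_le_of_colon_eq hIhom hJhom hcolon hz hz0
      (hIhom.exists_isHomogeneous_of_ordDeg_le hI0 (by omega))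
      (hJhom.exists_isHomogeneous_of_ordDeg_le hJ0 (by omega))

theorem order_of_intersection_of_full_sum {k : Type*} [Field k] [Infinite k]
    (I J : Ideal (MvPolynomial (Fin 2) k))
    (hI0 : I ≠ ⊥) (hItop : I ≠ ⊤) (hJ0 : J ≠ ⊥) (hJtop : J ≠ ⊤)
    (hIhom : IsHomogeneousIdeal I) (hJhom : IsHomogeneousIdeal J)
    (hfull : IsFull (I + J)) :
    max (ordDeg I) (ordDeg J) ≤ ordDeg (I ⊓ J) ∧
      ordDeg (I ⊓ J) ≤ max (ordDeg I) (ordDeg J) + 1 :=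
  order_of_intersection_of_full_sum_general I J hI0 hJ0 hIhom hJhom hfull

end
end

section
/- Let S = k[x₁, …, xₙ] be a polynomial ring over a field k, let I and J be ideals of S, and let f and g be nonzero elements of S. Let l be a least common multiple of f and g (S is a UFD), and write l = f·f′ = g·g′. Then fI ∩ gJ = l·((I : f′) ∩ (J : g′)). -/
open MvPolynomial

theorem product_intersection_lcm {k : Type*} [Field k] {n : ℕ}
    (I J : Ideal (MvPolynomial (Fin n) k))
    (f g l f' g' : MvPolynomial (Fin n) k)
    (hf : f ≠ 0) (hg : g ≠ 0)
    (hfl : f ∣ l) (hgl : g ∣ l)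
    (hlcm : ∀ m : MvPolynomial (Fin n) k, f ∣ m → g ∣ m → l ∣ m)
    (hff' : l = f * f') (hgg' : l = g * g') :
    (Ideal.span {f} * I) ⊓ (Ideal.span {g} * J) =
      Ideal.span {l} *
        (Submodule.colon I (Ideal.span {f'}) ⊓ Submodule.colon J (Ideal.span {g'})) := by
  apply le_antisymm
  · intro p hp
    obtain ⟨hp1, hp2⟩ := Submodule.mem_inf.mp hp
    rw [Ideal.mem_span_singleton_mul] at hp1 hp2
    obtain ⟨a, haI, ha⟩ := hp1
    obtain ⟨b, hbJ, hb⟩ := hp2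
    obtain ⟨q, hq⟩ := hlcm p ⟨a, ha.symm⟩ ⟨b, hb.symm⟩
    rw [Ideal.mem_span_singleton_mul]
    refine ⟨q, ⟨?_, ?_⟩, hq.symm⟩
    · simp only [SetLike.mem_coe, Ideal.mem_colon_span_singleton]
      have h1 : f * a = f * (f' * q) := by rw [ha, hq, hff']; ring
      have h2 := mul_left_cancel₀ hf h1
      rw [mul_comm, ← h2]; exact haI
    · simp only [SetLike.mem_coe, Ideal.mem_colon_span_singleton]
      have h1 : g * b = g * (g' * q) := by rw [hb, hq, hgg']; ring
      have h2 := mul_left_cancel₀ hg h1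
      rw [mul_comm, ← h2]; exact hbJ
  · intro p hp
    rw [Ideal.mem_span_singleton_mul] at hp
    obtain ⟨q, ⟨hqI, hqJ⟩, hq⟩ := hp
    simp only [SetLike.mem_coe, Ideal.mem_colon_span_singleton] at hqI hqJ
    refine Submodule.mem_inf.mpr ⟨?_, ?_⟩
    · rw [Ideal.mem_span_singleton_mul]
      exact ⟨q * f', hqI, by rw [← hq, hff']; ring⟩
    · rw [Ideal.mem_span_singleton_mul]
      exact ⟨q * g', hqJ, by rw [← hq, hgg']; ring⟩
end

section
/- Let S = k[x₁, …, xₙ] be a polynomial ring over a field k with homogeneous maximal ideal 𝔪 = (x₁, …, xₙ). Let I and J be ideals of S with I ∩ J ⊆ 𝔪J, and let s ≥ 0 be an integer. If J ∩ 𝔪^{s+1}I = 𝔪^{s}(I ∩ J), then 𝔪^{s+1}I ∩ 𝔪^{s+1}J = 𝔪^{s}(I ∩ J). -/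
open MvPolynomial

theorem Ideal.pow_succ_mul_inf_pow_succ_mul_eq {R : Type*} [CommSemiring R] {m I J : Ideal R}
    {s : ℕ} (hIJ : I ⊓ J ≤ m * J) (h : J ⊓ m ^ (s + 1) * I = m ^ s * (I ⊓ J)) :
    m ^ (s + 1) * I ⊓ m ^ (s + 1) * J = m ^ s * (I ⊓ J) := by
  apply le_antisymm
  · calc m ^ (s + 1) * I ⊓ m ^ (s + 1) * J ≤ J ⊓ m ^ (s + 1) * I := by
          rw [inf_comm]; exact inf_le_inf_right _ Ideal.mul_le_right
      _ = m ^ s * (I ⊓ J) := h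
  · refine le_inf (h ▸ inf_le_right) ?_
    calc m ^ s * (I ⊓ J) ≤ m ^ s * (m * J) := Ideal.mul_mono_right hIJ
      _ = m ^ (s + 1) * J := by rw [← mul_assoc, ← pow_succ]

theorem pow_mul_inter_pow_mul {k : Type*} [Field k] {n : ℕ}
    (I J : Ideal (MvPolynomial (Fin n) k)) (s : ℕ)
    (hIJ : I ⊓ J ≤ Ideal.span (Set.range (X : Fin n → MvPolynomial (Fin n) k)) * J)
    (h : J ⊓ Ideal.span (Set.range (X : Fin n → MvPolynomial (Fin n) k)) ^ (s + 1) * I =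
      Ideal.span (Set.range (X : Fin n → MvPolynomial (Fin n) k)) ^ s * (I ⊓ J)) :
    Ideal.span (Set.range (X : Fin n → MvPolynomial (Fin n) k)) ^ (s + 1) * I ⊓
        Ideal.span (Set.range (X : Fin n → MvPolynomial (Fin n) k)) ^ (s + 1) * J =
      Ideal.span (Set.range (X : Fin n → MvPolynomial (Fin n) k)) ^ s * (I ⊓ J) :=
  Ideal.pow_succ_mul_inf_pow_succ_mul_eq hIJ h
end

section
/- Let S = k[x₁, …, xₙ] be a polynomial ring over a field k (a UFD). Let J be an ideal of S and let a, f be nonzero elements of S. Let h be a greatest common divisor of a and f, and write a = h·a₁ and f = h·f₁ (so a₁ and f₁ are coprime). Then the colon ideal (aJ : f) equals a₁·(J : f₁). -/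
open MvPolynomial

theorem colon_of_product_gcd {k : Type*} [Field k] {n : ℕ}
    (J : Ideal (MvPolynomial (Fin n) k))
    (a f h a₁ f₁ : MvPolynomial (Fin n) k)
    (ha : a ≠ 0) (hf : f ≠ 0)
    (hha : h ∣ a) (hhf : h ∣ f)
    (hgcd : ∀ d : MvPolynomial (Fin n) k, d ∣ a → d ∣ f → d ∣ h)
    (ha₁ : a = h * a₁) (hf₁ : f = h * f₁) :
    Submodule.colon (Ideal.span {a} * J) (Ideal.span {f}) =
      Ideal.span {a₁} * Submodule.colon J (Ideal.span {f₁}) := by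
  have hh0 : h ≠ 0 := fun h0 => ha (by simp [ha₁, h0])
  have ha₁0 : a₁ ≠ 0 := fun h0 => ha (by simp [ha₁, h0])
  have hcop : IsRelPrime a₁ f₁ := by
    intro d hd1 hd2
    have h1 : h * d ∣ a := ha₁ ▸ mul_dvd_mul_left h hd1
    have h2 : h * d ∣ f := hf₁ ▸ mul_dvd_mul_left h hd2
    have := hgcd _ h1 h2
    rw [isUnit_iff_dvd_one]
    exact (mul_dvd_mul_iff_left hh0).mp (by simpa using this)
  apply le_antisymm
  · intro u hu
    rw [Ideal.mem_colon_span_singleton, Ideal.mem_span_singleton_mul] at hu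
    obtain ⟨j, hj, hje⟩ := hu
    rw [ha₁, hf₁] at hje
    have hcancel : u * f₁ = a₁ * j := by
      have : h * (u * f₁) = h * (a₁ * j) := by linear_combination -hje
      exact mul_left_cancel₀ hh0 this
    have hdvd : a₁ ∣ u := hcop.dvd_of_dvd_mul_right ⟨j, hcancel⟩
    obtain ⟨v, hv⟩ := hdvd
    have hvJ : v * f₁ ∈ J := by
      have : a₁ * (v * f₁) = a₁ * j := by rw [← hcancel, hv]; ring
      rw [mul_left_cancel₀ ha₁0 this]; exact hj
    rw [Ideal.mem_span_singleton_mul]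
    exact ⟨v, Ideal.mem_colon_span_singleton.mpr hvJ, hv.symm⟩
  · rw [Ideal.mul_le]
    intro r hr s hs
    rw [Ideal.mem_span_singleton] at hr
    obtain ⟨c, hc⟩ := hr
    rw [Ideal.mem_colon_span_singleton] at hs
    rw [Ideal.mem_colon_span_singleton, Ideal.mem_span_singleton_mul]
    exact ⟨c * (s * f₁), Ideal.mul_mem_left _ _ hs, by rw [hc, ha₁, hf₁]; ring⟩
end
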